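/- arXiv:1509.00559 — 8 statements merged into one kernel-verified Lean document; each statement's English description precedes it below -/
import Mathlib

section
/- The binary operation ∘ on M = (𝔽₃)¹⁹ defined by x∘y = x + y + f(x,y) satisfies the Moufang identity: for all x, y, z in M, (x∘y)∘(z∘x) = (x∘(y∘z))∘x. -/
/-- The polynomial map `f` defining the loop multiplication on `(ZMod 3)^19`.
Indices are shifted by one: `x 0` corresponds to `x₁`, ..., `x 18` to `x₁₉`. -/
def f (x y : Fin 19 → ZMod 3) : Fin 19 → ZMod 3 :=
  ![0, 0, 0, 0,
    -(x 1 * y 0),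
    -(x 2 * y 0),
    -(x 3 * y 0),
    -(x 2 * y 1),
    -(x 3 * y 1),
    -(x 3 * y 2),
    -(x 1 * x 2 * y 0) - x 1 * y 0 * y 2 + x 4 * y 2 - x 7 * y 0,
    -(x 1 * x 3 * y 0) - x 1 * y 0 * y 3 + x 4 * y 3 - x 8 * y 0,
    -(x 2 * y 0 * y 1) + x 5 * y 1 + x 7 * y 0,
    -(x 2 * x 3 * y 0) - x 2 * y 0 * y 3 + x 5 * y 3 - x 9 * y 0,
    -(x 3 * y 0 * y 1) + x 6 * y 1 + x 8 * y 0,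
    -(x 3 * y 0 * y 2) + x 6 * y 2 + x 9 * y 0,
    -(x 2 * x 3 * y 1) - x 2 * y 1 * y 3 + x 7 * y 3 - x 9 * y 1,
    -(x 3 * y 1 * y 2) + x 8 * y 2 + x 9 * y 1,
    -(x 0 * x 1 * x 3 * y 2) + x 0 * x 1 * y 2 * y 3 + x 0 * x 2 * y 1 * y 3
      + x 0 * x 3 * y 1 * y 2 - x 0 * y 1 * y 2 * y 3
      - x 1 * x 2 * x 3 * y 0 + x 1 * x 2 * y 0 * y 3 + x 1 * x 3 * y 0 * y 2
      + x 2 * x 3 * y 0 * y 1 - x 2 * y 0 * y 1 * y 3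
      + x 0 * x 7 * y 3 - x 0 * x 8 * y 2 + x 0 * x 9 * y 1
      - x 0 * y 1 * y 9 + x 0 * y 2 * y 8 - x 0 * y 3 * y 7
      - x 1 * x 5 * y 3 + x 1 * x 6 * y 2 - x 1 * x 9 * y 0
      + x 1 * y 0 * y 9 - x 1 * y 2 * y 6 + x 1 * y 3 * y 5
      + x 2 * x 4 * y 3 - x 2 * x 6 * y 1 + x 2 * x 8 * y 0
      - x 2 * y 0 * y 8 + x 2 * y 1 * y 6 - x 2 * y 3 * y 4
      - x 3 * x 4 * y 2 + x 3 * x 5 * y 1 - x 3 * x 7 * y 0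
      + x 3 * y 0 * y 7 - x 3 * y 1 * y 5 + x 3 * y 2 * y 4]

/-- The loop multiplication `x ∘ y = x + y + f(x,y)` on `M = (ZMod 3)^19`. -/
def circ (x y : Fin 19 → ZMod 3) : Fin 19 → ZMod 3 := x + y + f x y

/-- The `i`-th standard basis vector of `(ZMod 3)^19`. -/
def e (i : Fin 19) : Fin 19 → ZMod 3 := fun j => if j = i then 1 else 0

lemma f_apply_0 (x y : Fin 19 → ZMod 3) : f x y ⟨0, by norm_num⟩ = 0 := rfl
lemma f_apply_0' (x y : Fin 19 → ZMod 3) : f x y 0 = 0 := rfl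
lemma f_apply_1 (x y : Fin 19 → ZMod 3) : f x y ⟨1, by norm_num⟩ = 0 := rfl
lemma f_apply_1' (x y : Fin 19 → ZMod 3) : f x y 1 = 0 := rfl
lemma f_apply_2 (x y : Fin 19 → ZMod 3) : f x y ⟨2, by norm_num⟩ = 0 := rfl
lemma f_apply_2' (x y : Fin 19 → ZMod 3) : f x y 2 = 0 := rfl
lemma f_apply_3 (x y : Fin 19 → ZMod 3) : f x y ⟨3, by norm_num⟩ = 0 := rfl
lemma f_apply_3' (x y : Fin 19 → ZMod 3) : f x y 3 = 0 := rfl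
lemma f_apply_4 (x y : Fin 19 → ZMod 3) : f x y ⟨4, by norm_num⟩ = -(x 1 * y 0) := rfl
lemma f_apply_4' (x y : Fin 19 → ZMod 3) : f x y 4 = -(x 1 * y 0) := rfl
lemma f_apply_5 (x y : Fin 19 → ZMod 3) : f x y ⟨5, by norm_num⟩ = -(x 2 * y 0) := rfl
lemma f_apply_5' (x y : Fin 19 → ZMod 3) : f x y 5 = -(x 2 * y 0) := rfl
lemma f_apply_6 (x y : Fin 19 → ZMod 3) : f x y ⟨6, by norm_num⟩ = -(x 3 * y 0) := rfl
lemma f_apply_6' (x y : Fin 19 → ZMod 3) : f x y 6 = -(x 3 * y 0) := rfl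
lemma f_apply_7 (x y : Fin 19 → ZMod 3) : f x y ⟨7, by norm_num⟩ = -(x 2 * y 1) := rfl
lemma f_apply_7' (x y : Fin 19 → ZMod 3) : f x y 7 = -(x 2 * y 1) := rfl
lemma f_apply_8 (x y : Fin 19 → ZMod 3) : f x y ⟨8, by norm_num⟩ = -(x 3 * y 1) := rfl
lemma f_apply_8' (x y : Fin 19 → ZMod 3) : f x y 8 = -(x 3 * y 1) := rfl
lemma f_apply_9 (x y : Fin 19 → ZMod 3) : f x y ⟨9, by norm_num⟩ = -(x 3 * y 2) := rfl
lemma f_apply_9' (x y : Fin 19 → ZMod 3) : f x y 9 = -(x 3 * y 2) := rfl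
lemma f_apply_10 (x y : Fin 19 → ZMod 3) : f x y ⟨10, by norm_num⟩ = -(x 1 * x 2 * y 0) - x 1 * y 0 * y 2 + x 4 * y 2 - x 7 * y 0 := rfl
lemma f_apply_10' (x y : Fin 19 → ZMod 3) : f x y 10 = -(x 1 * x 2 * y 0) - x 1 * y 0 * y 2 + x 4 * y 2 - x 7 * y 0 := rfl
lemma f_apply_11 (x y : Fin 19 → ZMod 3) : f x y ⟨11, by norm_num⟩ = -(x 1 * x 3 * y 0) - x 1 * y 0 * y 3 + x 4 * y 3 - x 8 * y 0 := rfl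
lemma f_apply_11' (x y : Fin 19 → ZMod 3) : f x y 11 = -(x 1 * x 3 * y 0) - x 1 * y 0 * y 3 + x 4 * y 3 - x 8 * y 0 := rfl
lemma f_apply_12 (x y : Fin 19 → ZMod 3) : f x y ⟨12, by norm_num⟩ = -(x 2 * y 0 * y 1) + x 5 * y 1 + x 7 * y 0 := rfl
lemma f_apply_12' (x y : Fin 19 → ZMod 3) : f x y 12 = -(x 2 * y 0 * y 1) + x 5 * y 1 + x 7 * y 0 := rfl
lemma f_apply_13 (x y : Fin 19 → ZMod 3) : f x y ⟨13, by norm_num⟩ = -(x 2 * x 3 * y 0) - x 2 * y 0 * y 3 + x 5 * y 3 - x 9 * y 0 := rfl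
lemma f_apply_13' (x y : Fin 19 → ZMod 3) : f x y 13 = -(x 2 * x 3 * y 0) - x 2 * y 0 * y 3 + x 5 * y 3 - x 9 * y 0 := rfl
lemma f_apply_14 (x y : Fin 19 → ZMod 3) : f x y ⟨14, by norm_num⟩ = -(x 3 * y 0 * y 1) + x 6 * y 1 + x 8 * y 0 := rfl
lemma f_apply_14' (x y : Fin 19 → ZMod 3) : f x y 14 = -(x 3 * y 0 * y 1) + x 6 * y 1 + x 8 * y 0 := rfl
lemma f_apply_15 (x y : Fin 19 → ZMod 3) : f x y ⟨15, by norm_num⟩ = -(x 3 * y 0 * y 2) + x 6 * y 2 + x 9 * y 0 := rfl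
lemma f_apply_15' (x y : Fin 19 → ZMod 3) : f x y 15 = -(x 3 * y 0 * y 2) + x 6 * y 2 + x 9 * y 0 := rfl
lemma f_apply_16 (x y : Fin 19 → ZMod 3) : f x y ⟨16, by norm_num⟩ = -(x 2 * x 3 * y 1) - x 2 * y 1 * y 3 + x 7 * y 3 - x 9 * y 1 := rfl
lemma f_apply_16' (x y : Fin 19 → ZMod 3) : f x y 16 = -(x 2 * x 3 * y 1) - x 2 * y 1 * y 3 + x 7 * y 3 - x 9 * y 1 := rfl
lemma f_apply_17 (x y : Fin 19 → ZMod 3) : f x y ⟨17, by norm_num⟩ = -(x 3 * y 1 * y 2) + x 8 * y 2 + x 9 * y 1 := rfl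
lemma f_apply_17' (x y : Fin 19 → ZMod 3) : f x y 17 = -(x 3 * y 1 * y 2) + x 8 * y 2 + x 9 * y 1 := rfl
lemma f_apply_18 (x y : Fin 19 → ZMod 3) : f x y ⟨18, by norm_num⟩ = -(x 0 * x 1 * x 3 * y 2) + x 0 * x 1 * y 2 * y 3 + x 0 * x 2 * y 1 * y 3 + x 0 * x 3 * y 1 * y 2 - x 0 * y 1 * y 2 * y 3 - x 1 * x 2 * x 3 * y 0 + x 1 * x 2 * y 0 * y 3 + x 1 * x 3 * y 0 * y 2 + x 2 * x 3 * y 0 * y 1 - x 2 * y 0 * y 1 * y 3 + x 0 * x 7 * y 3 - x 0 * x 8 * y 2 + x 0 * x 9 * y 1 - x 0 * y 1 * y 9 + x 0 * y 2 * y 8 - x 0 * y 3 * y 7 - x 1 * x 5 * y 3 + x 1 * x 6 * y 2 - x 1 * x 9 * y 0 + x 1 * y 0 * y 9 - x 1 * y 2 * y 6 + x 1 * y 3 * y 5 + x 2 * x 4 * y 3 - x 2 * x 6 * y 1 + x 2 * x 8 * y 0 - x 2 * y 0 * y 8 + x 2 * y 1 * y 6 - x 2 * y 3 * y 4 - x 3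 * x 4 * y 2 + x 3 * x 5 * y 1 - x 3 * x 7 * y 0 + x 3 * y 0 * y 7 - x 3 * y 1 * y 5 + x 3 * y 2 * y 4 := rfl
lemma f_apply_18' (x y : Fin 19 → ZMod 3) : f x y 18 = -(x 0 * x 1 * x 3 * y 2) + x 0 * x 1 * y 2 * y 3 + x 0 * x 2 * y 1 * y 3 + x 0 * x 3 * y 1 * y 2 - x 0 * y 1 * y 2 * y 3 - x 1 * x 2 * x 3 * y 0 + x 1 * x 2 * y 0 * y 3 + x 1 * x 3 * y 0 * y 2 + x 2 * x 3 * y 0 * y 1 - x 2 * y 0 * y 1 * y 3 + x 0 * x 7 * y 3 - x 0 * x 8 * y 2 + x 0 * x 9 * y 1 - x 0 * y 1 * y 9 + x 0 * y 2 * y 8 - x 0 * y 3 * y 7 - x 1 * x 5 * y 3 + x 1 * x 6 * y 2 - x 1 * x 9 * y 0 + x 1 * y 0 * y 9 - x 1 * y 2 * y 6 + x 1 * y 3 * y 5 + x 2 * x 4 * y 3 - x 2 * x 6 * y 1 + x 2 * x 8 * y 0 - x 2 * y 0 * y 8 + x 2 * y 1 * y 6 - x 2 * y 3 * y 4 - x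 3 * x 4 * y 2 + x 3 * x 5 * y 1 - x 3 * x 7 * y 0 + x 3 * y 0 * y 7 - x 3 * y 1 * y 5 + x 3 * y 2 * y 4 := rfl

lemma circ_apply (x y : Fin 19 → ZMod 3) (i : Fin 19) : circ x y i = x i + y i + f x y i := rfl

set_option maxHeartbeats 4000000 in
/-- The operation `∘` on `M = (ZMod 3)^19` satisfies the Moufang identity. -/
theorem circ_moufang (x y z : Fin 19 → ZMod 3) :
    circ (circ x y) (circ z x) = circ (circ x (circ y z)) x := by
  funext i
  fin_cases i <;>
    simp only [circ_apply, f_apply_0, f_apply_0', f_apply_1, f_apply_1', f_apply_2, f_apply_2', f_apply_3, f_apply_3', f_apply_4, f_apply_4', f_apply_5, f_apply_5', f_apply_6, f_apply_6', f_apply_7, f_apply_7', f_apply_8, f_apply_8', f_apply_9, f_apply_9', f_apply_10, f_apply_10', f_apply_11, f_apply_11', f_apply_12, f_apply_12', f_apply_13, f_apply_13', f_apply_14, f_apply_14', f_apply_15, f_apply_15', f_apply_16, f_apply_16', f_apply_17, f_apply_17', f_apply_18, f_apply_18'] <;>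
    rw [← sub_eq_zero] <;> ring_nf <;> reduce_mod_char
end

section
/- The four generators associate in triples: (a∘b)∘c = a∘(b∘c), (a∘b)∘d = a∘(b∘d), (a∘c)∘d = a∘(c∘d), and (b∘c)∘d = b∘(c∘d). -/
/-- The four generators `a = e₁`, `b = e₂`, `c = e₃`, `d = e₄`. -/
def a : Fin 19 → ZMod 3 := e 0
def b : Fin 19 → ZMod 3 := e 1
def c : Fin 19 → ZMod 3 := e 2
def d : Fin 19 → ZMod 3 := e 3

/-- The four generators associate in triples. -/
theorem generators_associate :
    circ (circ a b) c = circ a (circ b c) ∧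
    circ (circ a b) d = circ a (circ b d) ∧
    circ (circ a c) d = circ a (circ c d) ∧
    circ (circ b c) d = circ b (circ c d) := by
  refine ⟨?_,?_,?_,?_⟩ <;> · funext i; fin_cases i <;> decide
end

section
/- The basis vectors e₅,…,e₁₀ are the commutators of the generators: a∘b = (b∘a)∘e₅, a∘c = (c∘a)∘e₆, a∘d = (d∘a)∘e₇, b∘c = (c∘b)∘e₈, b∘d = (d∘b)∘e₉, and c∘d = (d∘c)∘e₁₀ (i.e., e₅=[a,b], e₆=[a,c], e₇=[a,d], e₈=[b,c], e₉=[b,d], e₁₀=[c,d], where [x,y] is the unique element t with x∘y = (y∘x)∘t). -/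
/-- `e₅,…,e₁₀` are the commutators of the generators:
`e₅ = [a,b]`, `e₆ = [a,c]`, `e₇ = [a,d]`, `e₈ = [b,c]`, `e₉ = [b,d]`, `e₁₀ = [c,d]`,
where `[x,y]` is the unique `t` with `x ∘ y = (y ∘ x) ∘ t`. -/
theorem commutators :
    circ a b = circ (circ b a) (e 4) ∧
    circ a c = circ (circ c a) (e 5) ∧
    circ a d = circ (circ d a) (e 6) ∧
    circ b c = circ (circ c b) (e 7) ∧
    circ b d = circ (circ d b) (e 8) ∧
    circ c d = circ (circ d c) (e 9) := by
  decide
end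

section
/- The basis vectors e₁₁,…,e₁₈ are the iterated commutators: e₅∘c = (c∘e₅)∘e₁₁, e₅∘d = (d∘e₅)∘e₁₂, e₆∘b = (b∘e₆)∘e₁₃, e₆∘d = (d∘e₆)∘e₁₄, e₇∘b = (b∘e₇)∘e₁₅, e₇∘c = (c∘e₇)∘e₁₆, e₈∘d = (d∘e₈)∘e₁₇, and e₉∘c = (c∘e₉)∘e₁₈ (i.e., e₁₁=[[a,b],c], e₁₂=[[a,b],d], e₁₃=[[a,c],b], e₁₄=[[a,c],d], e₁₅=[[a,d],b], e₁₆=[[a,d],c], e₁₇=[[b,c],d], e₁₈=[[b,d],c], where [x,y] is the unique element t with x∘y = (y∘x)∘t, and e₅=[a,b], e₆=[a,c], e₇=[a,d], e₈=[b,c], e₉=[b,d]). -/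
/-- `e₁₁,…,e₁₈` are the iterated commutators:
`e₁₁ = [[a,b],c]`, `e₁₂ = [[a,b],d]`, `e₁₃ = [[a,c],b]`, `e₁₄ = [[a,c],d]`,
`e₁₅ = [[a,d],b]`, `e₁₆ = [[a,d],c]`, `e₁₇ = [[b,c],d]`, `e₁₈ = [[b,d],c]`,
where `[x,y]` is the unique `t` with `x ∘ y = (y ∘ x) ∘ t`, and
`e₅ = [a,b]`, `e₆ = [a,c]`, `e₇ = [a,d]`, `e₈ = [b,c]`, `e₉ = [b,d]`. -/
theorem iterated_commutators :
    circ (e 4) c = circ (circ c (e 4)) (e 10) ∧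
    circ (e 4) d = circ (circ d (e 4)) (e 11) ∧
    circ (e 5) b = circ (circ b (e 5)) (e 12) ∧
    circ (e 5) d = circ (circ d (e 5)) (e 13) ∧
    circ (e 6) b = circ (circ b (e 6)) (e 14) ∧
    circ (e 6) c = circ (circ c (e 6)) (e 15) ∧
    circ (e 7) d = circ (circ d (e 7)) (e 16) ∧
    circ (e 8) c = circ (circ c (e 8)) (e 17) := by
  decide
end

section
/- The associator of [a,b]=e₅ with c and d is e₁₉: (e₅∘c)∘d = (e₅∘(c∘d))∘e₁₉, and e₁₉ ≠ 0; in particular (e₅∘c)∘d ≠ e₅∘(c∘d), so the operation ∘ on M is not associative. -/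
/-- The associator of `[a,b] = e₅` with `c` and `d` is `e₁₉ ≠ 0`; in particular
`(e₅ ∘ c) ∘ d ≠ e₅ ∘ (c ∘ d)`, so the operation `∘` is not associative. -/
theorem associator_nontrivial :
    circ (circ (e 4) c) d = circ (circ (e 4) (circ c d)) (e 18) ∧
    e 18 ≠ 0 ∧
    circ (circ (e 4) c) d ≠ circ (e 4) (circ c d) ∧
    ¬ (∀ x y z : Fin 19 → ZMod 3, circ (circ x y) z = circ x (circ y z)) := by
  refine ⟨?_, ?_, ?_, ?_⟩
  · funext j; fin_cases j <;> decide
  · intro h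
    have := congrFun h 18
    simp [e] at this
  · intro h
    have := congrFun h 18
    revert this; decide
  · intro h
    have := congrFun (h (e 4) c d) 18
    revert this; decide
end

section
/- Negative answer to Problem 1: let l_{c,d} = { x ∈ M | (x∘c)∘d = x∘(c∘d) }. Then a ∈ l_{c,d} and b ∈ l_{c,d}, but a∘b ∉ l_{c,d}; in particular, l_{c,d} is not closed under ∘ and hence is not a subloop of (M,∘). -/
/-- The set `l_{c,d}` of elements associating with `c` and `d`. -/
def lcd : Set (Fin 19 → ZMod 3) := {x | circ (circ x c) d = circ x (circ c d)}

/-- Negative answer to Problem 1: `a, b ∈ l_{c,d}` but `a ∘ b ∉ l_{c,d}`;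
in particular `l_{c,d}` is not closed under `∘`. -/
theorem lcd_not_subloop :
    a ∈ lcd ∧ b ∈ lcd ∧ circ a b ∉ lcd := by
  refine ⟨?_, ?_, ?_⟩ <;>
    simp only [lcd, Set.mem_setOf_eq] <;> decide
end

section
/- Proposition 1: Let M be a Malcev algebra over a field F of characteristic different from 2 and 3, and let X ⊆ M be a generating set of M (i.e., the smallest F-submodule of M containing X and closed under the multiplication is M itself). If J(x,y,z) = 0 for all x, y, z ∈ X, then J(a,b,c) = 0 for all a, b, c ∈ M; that is, M is a Lie algebra. -/
/-- The Jacobian `J(x,y,z) = (xy)z + (yz)x + (zx)y` of a binary operation. -/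
def jac {M : Type*} [AddCommGroup M] (mul : M → M → M) (x y z : M) : M :=
  mul (mul x y) z + mul (mul y z) x + mul (mul z x) y

/-- Monomials in a generating set `X`, together with their degree. -/
inductive MalMon {M : Type*} (X : Set M) (mul : M → M → M) : M → ℕ → Prop where
  | leaf : ∀ x ∈ X, MalMon X mul x 1
  | node : ∀ {u v m n}, MalMon X mul u m → MalMon X mul v n → MalMon X mul (mul u v) (m + n)

/-- Proposition 1: a Malcev algebra over a field of characteristic `≠ 2, 3`
whose generating set `X` satisfies `J(x,y,z) = 0` for all `x, y, z ∈ X`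
is a Lie algebra, i.e. `J` vanishes identically. -/
theorem malcev_jacobian_vanishes
    (F : Type*) [Field F] (h2 : ringChar F ≠ 2) (h3 : ringChar F ≠ 3)
    (M : Type*) [AddCommGroup M] [Module F M]
    (mul : M → M → M)
    (mul_add_left : ∀ x y z : M, mul (x + y) z = mul x z + mul y z)
    (mul_add_right : ∀ x y z : M, mul x (y + z) = mul x y + mul x z)
    (mul_smul_left : ∀ (r : F) (x y : M), mul (r • x) y = r • mul x y)
    (mul_smul_right : ∀ (r : F) (x y : M), mul x (r • y) = r • mul x y)
    (mul_self : ∀ x : M, mul x x = 0)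
    (malcev : ∀ x y z : M, jac mul x y (mul x z) = mul (jac mul x y z) x)
    (X : Set M)
    (hgen : ∀ p : Submodule F M, X ⊆ (p : Set M) →
      (∀ x ∈ p, ∀ y ∈ p, mul x y ∈ p) → ∀ m : M, m ∈ p)
    (hX : ∀ x ∈ X, ∀ y ∈ X, ∀ z ∈ X, jac mul x y z = 0) :
    ∀ a b c : M, jac mul a b c = 0 := by
  -- basic consequences of bilinearity
  have mzr : ∀ x : M, mul x 0 = 0 := by
    intro x
    have h := mul_add_right x 0 0
    rw [add_zero] at h
    exact left_eq_add.mp h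
  have mzl : ∀ x : M, mul 0 x = 0 := by
    intro x
    have h := mul_add_left 0 0 x
    rw [add_zero] at h
    exact left_eq_add.mp h
  have hcan : ∀ u v : M, mul u v + mul v u = 0 := by
    intro u v
    have h := mul_self (u + v)
    rw [mul_add_left, mul_add_right, mul_add_right, mul_self u, mul_self v] at h
    linear_combination (norm := module) h
  have skew : ∀ u v : M, mul u v = -mul v u := fun u v =>
    eq_neg_of_add_eq_zero_left (hcan u v)
  have mnl : ∀ x y : M, mul (-x) y = -mul x y := by
    intro x y
    have h := mul_add_left x (-x) y
    rw [add_neg_cancel, mzl] at h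
    linear_combination (norm := module) -h
  have mnr : ∀ x y : M, mul x (-y) = -mul x y := by
    intro x y
    have h := mul_add_right x y (-y)
    rw [add_neg_cancel, mzr] at h
    linear_combination (norm := module) -h
  have hcanL : ∀ u v w : M, mul (mul u v) w + mul (mul v u) w = 0 := by
    intro u v w
    have h := mul_add_left (mul u v) (mul v u) w
    rw [hcan u v, mzl] at h
    linear_combination (norm := module) -h
  -- basic properties of the Jacobian
  have jr : ∀ x y z : M, jac mul x y z = jac mul y z x := by
    intro x y z; simp only [jac]; abel
  have jsw : ∀ x y z : M, jac mul x y z = -jac mul y x z := by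
    intro x y z
    simp only [jac]
    linear_combination (norm := module) hcanL x y z + hcanL y z x + hcanL z x y
  have jsw23 : ∀ x y z : M, jac mul x y z = -jac mul x z y := by
    intro x y z
    rw [jr x y z, jsw y z x, ← jr x z y]
  have jsw13 : ∀ x y z : M, jac mul x y z = -jac mul z y x := by
    intro x y z
    rw [jr x y z, jsw23 y z x, jr z y x]
  have jneg3 : ∀ x y w z : M, jac mul x y (mul w z) = -jac mul x y (mul z w) := by
    intro x y w z
    rw [skew w z]
    simp only [jac, mnl, mnr]
    abel
  -- linearized Malcev identity
  have L : ∀ x y z w : M, jac mul x y (mul w z) + jac mul w y (mul x z)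
      = mul (jac mul x y z) w + mul (jac mul w y z) x := by
    intro x y z w
    have h := malcev (x + w) y z
    have e1 := malcev x y z
    have e2 := malcev w y z
    simp only [jac, mul_add_left, mul_add_right] at h e1 e2 ⊢
    linear_combination (norm := module) h - e1 - e2
  -- a purely anticommutative rearrangement identity
  have hker : ∀ a b c d : M,
      jac mul b d (mul a c) + jac mul a c (mul b d)
        + mul (jac mul a c d) b + mul (jac mul a b c) d
      = jac mul c d (mul a b) + jac mul b c (mul a d) + jac mul a d (mul b c)
        + jac mul a b (mul c d) + mul (jac mul b c d) a + mul (jac mul a b d) c := by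
    intro a b c d
    have p1 : (mul (mul a b) (mul c d)) + (mul (mul c d) (mul a b)) = 0 := by
      rw [skew (mul a b) (mul c d)]; simp only [mnl, mnr, neg_add_cancel]
    have p2 : (mul (mul a c) (mul b d)) + (mul (mul b d) (mul a c)) = 0 := by
      rw [skew (mul a c) (mul b d)]; simp only [mnl, mnr, neg_add_cancel]
    have p3 : (mul (mul (mul a d) b) c) + (mul (mul (mul d a) b) c) = 0 := by
      rw [skew a d]; simp only [mnl, mnr, neg_add_cancel]
    have p4 : (mul (mul a d) (mul b c)) + (mul (mul b c) (mul a d)) = 0 := by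
      rw [skew (mul a d) (mul b c)]; simp only [mnl, mnr, neg_add_cancel]
    have p5 : (mul (mul (mul a c) b) d) + (mul (mul (mul c a) b) d) = 0 := by
      rw [skew a c]; simp only [mnl, mnr, neg_add_cancel]
    have p6 : (mul (mul (mul a c) d) b) + (mul (mul d (mul a c)) b) = 0 := by
      rw [skew (mul a c) d]; simp only [mnl, mnr, neg_add_cancel]
    have p7 : (mul (mul (mul a b) d) c) + (mul (mul d (mul a b)) c) = 0 := by
      rw [skew (mul a b) d]; simp only [mnl, mnr, neg_add_cancel]
    have p8 : (mul (mul b (mul c d)) a) + (mul (mul (mul c d) b) a) = 0 := by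
      rw [skew b (mul c d)]; simp only [mnl, mnr, neg_add_cancel]
    have p9 : (mul (mul (mul b c) d) a) + (mul (mul d (mul b c)) a) = 0 := by
      rw [skew (mul b c) d]; simp only [mnl, mnr, neg_add_cancel]
    have p10 : (mul (mul (mul d b) c) a) + (mul (mul (mul b d) c) a) = 0 := by
      rw [skew d b]; simp only [mnl, mnr, neg_add_cancel]
    have p11 : (mul (mul (mul d a) c) b) + (mul (mul c (mul d a)) b) = 0 := by
      rw [skew (mul d a) c]; simp only [mnl, mnr, neg_add_cancel]
    have p12 : (mul (mul c (mul d a)) b) + (mul (mul c (mul a d)) b) = 0 := by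
      rw [skew d a]; simp only [mnl, mnr, neg_add_cancel]
    have p13 : (mul (mul c (mul b d)) a) + (mul (mul (mul b d) c) a) = 0 := by
      rw [skew c (mul b d)]; simp only [mnl, mnr, neg_add_cancel]
    simp only [jac, mul_add_left, mul_add_right]
    linear_combination (norm := module) -p1 + p2 - p3 - p4 + p5 + p6 - p7 - p8 - p9
      - p10 + p11 - p12 + p13
  -- the key identity: J(ab,c,d) in terms of J's of lower degree
  have keyI : ∀ a b c d : M, (6 : F) • jac mul (mul a b) c d
      = (2 : F) • mul (jac mul b c d) a - (2 : F) • mul (jac mul a c d) b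
        - (4 : F) • mul (jac mul a b d) c + (4 : F) • mul (jac mul a b c) d := by
    intro a b c d
    have h1 := L a b c d
    have h2 := L a b d c
    have h3 := L a c b d
    have h4 := L a c d b
    have h5 := L a d b c
    rw [jneg3 a b d c, jsw d b (mul a c), jr d b c] at h1
    rw [jsw c b (mul a d), jsw c b d, mnl] at h2
    rw [jneg3 a c d b, jsw d c (mul a b), jsw23 a c b, jsw13 d c b, mnl, mnl] at h3
    rw [jneg3 a d c b, jsw23 a d b, mnl, ← jr b c d] at h5
    have hk := hker a b c d
    rw [jr (mul a b) c d]
    linear_combination (norm := module) (-1 : F) • h1 - (2 : F) • h2 - (4 : F) • h3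
      - (3 : F) • h4 + h5 - hk
  -- 6 ≠ 0 in F
  have six_ne : (6 : F) ≠ 0 := by
    have a2 : (2 : F) ≠ 0 := Ring.two_ne_zero h2
    have a3 : (3 : F) ≠ 0 := by
      intro h
      have hd : ringChar F ∣ 3 :=
        (CharP.cast_eq_zero_iff F (ringChar F) 3).mp (by exact_mod_cast h)
      rcases (Nat.prime_three).eq_one_or_self_of_dvd _ hd with h1 | h1
      · exact CharP.ringChar_ne_one h1
      · exact h3 h1
    have h6 : (6 : F) = 2 * 3 := by norm_num
    rw [h6]; exact mul_ne_zero a2 a3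
  -- node step
  have hnode : ∀ p q v w : M, jac mul q v w = 0 → jac mul p v w = 0 →
      jac mul p q w = 0 → jac mul p q v = 0 → jac mul (mul p q) v w = 0 := by
    intro p q v w e1 e2 e3 e4
    have h := keyI p q v w
    rw [e1, e2, e3, e4, mzl, mzl, mzl, mzl] at h
    simp only [smul_zero, sub_zero, add_zero] at h
    exact (smul_eq_zero.mp h).resolve_left six_ne
  -- degrees of monomials are positive
  have deg_pos : ∀ (u : M) (n : ℕ), MalMon X mul u n → 1 ≤ n := by
    intro u n h
    induction h with
    | leaf x hx => exact le_refl 1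
    | node hu hv ihu ihv => omega
  -- main induction: J vanishes on monomials
  have main : ∀ (N : ℕ) (u : M) (nu : ℕ) (v : M) (nv : ℕ) (w : M) (nw : ℕ),
      MalMon X mul u nu → MalMon X mul v nv → MalMon X mul w nw →
      nu + nv + nw ≤ N → jac mul u v w = 0 := by
    intro N
    induction N with
    | zero =>
      intro u nu v nv w nw hu hv hw hle
      exact absurd hle (by
        have := deg_pos _ _ hu; have := deg_pos _ _ hv; have := deg_pos _ _ hw; omega)
    | succ N ih =>
      intro u nu v nv w nw hu hv hw hle
      have hstep : ∀ (p : M) (np : ℕ) (q : M) (nq : ℕ) (v' : M) (nv' : ℕ) (w' : M) (nw' : ℕ),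
          MalMon X mul p np → MalMon X mul q nq → MalMon X mul v' nv' → MalMon X mul w' nw' →
          np + nq + nv' + nw' ≤ N + 1 → jac mul (mul p q) v' w' = 0 := by
        intro p np q nq v' nv' w' nw' hp hq hv' hw' hle'
        have d1 := deg_pos _ _ hp
        have d2 := deg_pos _ _ hq
        have d3 := deg_pos _ _ hv'
        have d4 := deg_pos _ _ hw'
        exact hnode p q v' w'
          (ih q nq v' nv' w' nw' hq hv' hw' (by omega))
          (ih p np v' nv' w' nw' hp hv' hw' (by omega))
          (ih p np q nq w' nw' hp hq hw' (by omega))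
          (ih p np q nq v' nv' hp hq hv' (by omega))
      cases hu with
      | node hp hq =>
        exact hstep _ _ _ _ _ _ _ _ hp hq hv hw (by omega)
      | leaf _ hx =>
        cases hv with
        | node hp hq =>
          rw [jr]
          exact hstep _ _ _ _ _ _ _ _ hp hq hw (MalMon.leaf u hx) (by omega)
        | leaf _ hy =>
          cases hw with
          | node hp hq =>
            rw [← jr]
            exact hstep _ _ _ _ _ _ _ _ hp hq (MalMon.leaf u hx) (MalMon.leaf v hy) (by omega)
          | leaf _ hz =>
            exact hX u hx v hy w hz
  -- the span of monomials is all of M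
  set S : Set M := {m | ∃ n, MalMon X mul m n} with hS
  have hXS : X ⊆ (Submodule.span F S : Set M) := fun x hx =>
    Submodule.subset_span ⟨1, MalMon.leaf x hx⟩
  have hclosed : ∀ x ∈ Submodule.span F S, ∀ y ∈ Submodule.span F S,
      mul x y ∈ Submodule.span F S := by
    intro x hx
    induction hx using Submodule.span_induction with
    | mem x hxS =>
      intro y hy
      induction hy using Submodule.span_induction with
      | mem y hyS =>
        obtain ⟨m, hm⟩ := hxS
        obtain ⟨n, hn⟩ := hyS
        exact Submodule.subset_span ⟨m + n, MalMon.node hm hn⟩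
      | zero => rw [mzr]; exact Submodule.zero_mem _
      | add y z hy hz ihy ihz => rw [mul_add_right]; exact Submodule.add_mem _ ihy ihz
      | smul r y hy ihy => rw [mul_smul_right]; exact Submodule.smul_mem _ _ ihy
    | zero => intro y hy; rw [mzl]; exact Submodule.zero_mem _
    | add x z hx hz ihx ihz =>
      intro y hy
      rw [mul_add_left]; exact Submodule.add_mem _ (ihx y hy) (ihz y hy)
    | smul r x hx ihx =>
      intro y hy
      rw [mul_smul_left]; exact Submodule.smul_mem _ _ (ihx y hy)
  have hall : ∀ m : M, m ∈ Submodule.span F S := hgen _ hXS hclosed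
  -- linearity of jac in each argument
  have jzero1 : ∀ b c : M, jac mul 0 b c = 0 := by
    intro b c; simp only [jac, mzl, mzr, add_zero, zero_add]
  have jadd1 : ∀ x y b c : M, jac mul (x + y) b c = jac mul x b c + jac mul y b c := by
    intro x y b c
    simp only [jac, mul_add_left, mul_add_right]
    abel
  have jsmul1 : ∀ (r : F) (x b c : M), jac mul (r • x) b c = r • jac mul x b c := by
    intro r x b c
    simp only [jac, mul_smul_left, mul_smul_right]
    module
  have jzero2 : ∀ a c : M, jac mul a 0 c = 0 := by
    intro a c; simp only [jac, mzl, mzr, add_zero, zero_add]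
  have jadd2 : ∀ (a x y c : M), jac mul a (x + y) c = jac mul a x c + jac mul a y c := by
    intro a x y c
    simp only [jac, mul_add_left, mul_add_right]
    abel
  have jsmul2 : ∀ (r : F) (a x c : M), jac mul a (r • x) c = r • jac mul a x c := by
    intro r a x c
    simp only [jac, mul_smul_left, mul_smul_right]
    module
  have jzero3 : ∀ a b : M, jac mul a b 0 = 0 := by
    intro a b; simp only [jac, mzl, mzr, add_zero, zero_add]
  have jadd3 : ∀ (a b x y : M), jac mul a b (x + y) = jac mul a b x + jac mul a b y := by
    intro a b x y
    simp only [jac, mul_add_left, mul_add_right]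
    abel
  have jsmul3 : ∀ (r : F) (a b x : M), jac mul a b (r • x) = r • jac mul a b x := by
    intro r a b x
    simp only [jac, mul_smul_left, mul_smul_right]
    module
  -- extend from monomials to the whole module
  have s3 : ∀ u v : M, u ∈ S → v ∈ S → ∀ c ∈ Submodule.span F S, jac mul u v c = 0 := by
    intro u v hu hv c hc
    induction hc using Submodule.span_induction with
    | mem c hcS =>
      obtain ⟨m, hm⟩ := hu
      obtain ⟨n, hn⟩ := hv
      obtain ⟨k, hk⟩ := hcS
      exact main (m + n + k) u m v n c k hm hn hk le_rfl
    | zero => exact jzero3 u v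
    | add x y hx hy ihx ihy => rw [jadd3, ihx, ihy, add_zero]
    | smul r x hx ihx => rw [jsmul3, ihx, smul_zero]
  have s2 : ∀ u : M, u ∈ S → ∀ b ∈ Submodule.span F S, ∀ c ∈ Submodule.span F S,
      jac mul u b c = 0 := by
    intro u hu b hb
    induction hb using Submodule.span_induction with
    | mem b hbS => intro c hc; exact s3 u b hu hbS c hc
    | zero => intro c hc; exact jzero2 u c
    | add x y hx hy ihx ihy =>
      intro c hc
      rw [jadd2, ihx c hc, ihy c hc, add_zero]
    | smul r x hx ihx =>
      intro c hc
      rw [jsmul2, ihx c hc, smul_zero]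
  have s1 : ∀ a ∈ Submodule.span F S, ∀ b ∈ Submodule.span F S, ∀ c ∈ Submodule.span F S,
      jac mul a b c = 0 := by
    intro a ha
    induction ha using Submodule.span_induction with
    | mem a haS => intro b hb c hc; exact s2 a haS b hb c hc
    | zero => intro b hb c hc; rw [jzero1]
    | add x y hx hy ihx ihy =>
      intro b hb c hc
      rw [jadd1, ihx b hb c hc, ihy b hb c hc, add_zero]
    | smul r x hx ihx =>
      intro b hb c hc
      rw [jsmul1, ihx b hb c hc, smul_zero]
  intro a b c
  exact s1 a (hall a) b (hall b) c (hall c)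
end

section
/- In any Malcev algebra M over a field of characteristic different from 2 and 3, the identity 3·J(w·x, y, z) = J(x,y,z)·w − J(y,z,w)·x − 2·J(z,w,x)·y + 2·J(w,x,y)·z holds for all w, x, y, z ∈ M. -/
/-- In any Malcev algebra over a field of characteristic `≠ 2, 3`, the identity
`3 J(wx, y, z) = J(x,y,z)w − J(y,z,w)x − 2 J(z,w,x)y + 2 J(w,x,y)z` holds. -/
theorem malcev_jacobian_identity
    (F : Type*) [Field F] (h2 : ringChar F ≠ 2) (h3 : ringChar F ≠ 3)
    (M : Type*) [AddCommGroup M] [Module F M]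
    (mul : M → M → M)
    (mul_add_left : ∀ x y z : M, mul (x + y) z = mul x z + mul y z)
    (mul_add_right : ∀ x y z : M, mul x (y + z) = mul x y + mul x z)
    (mul_smul_left : ∀ (r : F) (x y : M), mul (r • x) y = r • mul x y)
    (mul_smul_right : ∀ (r : F) (x y : M), mul x (r • y) = r • mul x y)
    (mul_self : ∀ x : M, mul x x = 0)
    (malcev : ∀ x y z : M, jac mul x y (mul x z) = mul (jac mul x y z) x)
    (w x y z : M) :
    (3 : F) • jac mul (mul w x) y z =
      mul (jac mul x y z) w - mul (jac mul y z w) x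
        - (2 : F) • mul (jac mul z w x) y + (2 : F) • mul (jac mul w x y) z := by
  have hneg_l : ∀ a b : M, mul (-a) b = -mul a b := fun a b => by
    rw [← neg_one_smul F a, mul_smul_left, neg_one_smul]
  have hneg_r : ∀ a b : M, mul a (-b) = -mul a b := fun a b => by
    rw [← neg_one_smul F b, mul_smul_right, neg_one_smul]
  have hskew : ∀ a b : M, mul a b = -mul b a := fun a b => by
    have h := mul_self (a + b)
    rw [mul_add_left, mul_add_right, mul_add_right, mul_self, mul_self] at h
    have h2 : mul a b + mul b a = 0 := by
      rw [← h]; abel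
    exact eq_neg_of_add_eq_zero_left h2
  have hskew_l : ∀ a b c : M, mul (mul a b) c = -mul (mul b a) c := fun a b c => by
    rw [hskew a b, hneg_l]
  have hskew_r : ∀ a b c : M, mul a (mul b c) = -mul a (mul c b) := fun a b c => by
    rw [hskew b c, hneg_r]
  have hskew_ll : ∀ a b c d : M,
      mul (mul (mul a b) c) d = -mul (mul (mul b a) c) d := fun a b c d => by
    rw [hskew a b, hneg_l, hneg_l]
  have hskew_lr : ∀ a b c d : M,
      mul (mul a (mul b c)) d = -mul (mul a (mul c b)) d := fun a b c d => by
    rw [hskew b c, hneg_r, hneg_l]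
  -- linearized Malcev identity
  have hlin : ∀ a b c d : M,
      jac mul a b (mul c d) + jac mul c b (mul a d) =
        mul (jac mul a b d) c + mul (jac mul c b d) a := fun a b c d => by
    have h := malcev (a + c) b d
    have h1 := malcev a b d
    have h2 := malcev c b d
    simp only [jac, mul_add_left, mul_add_right] at h h1 h2 ⊢
    linear_combination (norm := module) h - h1 - h2
  have two_ne : (2 : F) ≠ 0 := by
    intro h
    exact h2 (CharP.ringChar_of_prime_eq_zero Nat.prime_two h)
  apply smul_right_injective M two_ne
  have e1 := hlin w x y z
  have e2 := hlin w x z y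
  have e3 := hlin w y x z
  have e4 := hlin w y z x
  have e5 := hlin w z x y
  simp only [jac, mul_add_left, mul_add_right] at e1 e2 e3 e4 e5 ⊢
  linear_combination (norm := module)
        (-3 : F) • e1 +
        (-2 : F) • e2 +
        (-4 : F) • e3 +
        (-5 : F) • e4 +
        (-1 : F) • e5 +
        (1 : F) • hskew (mul y z) (mul w x) +
        (6 : F) • hskew_l z (mul w x) y +
        (-8 : F) • hskew_ll z x y w +
        (-2 : F) • hskew_ll z w y x +
        (1 : F) • hskew_ll z w x y +
        (-6 : F) • hskew_ll y w x z +
        (1 : F) • hskew_l x (mul y z) w +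
        (3 : F) • hskew_l y x (mul w z) +
        (3 : F) • hskew_l x (mul w z) y +
        (-9 : F) • hskew_ll y x z w +
        (-9 : F) • hskew_ll z y x w +
        (2 : F) • hskew_r (mul w x) z y +
        (2 : F) • hskew_lr x z y w +
        (1 : F) • hskew_ll z y w x +
        (2 : F) • hskew_l z x (mul w y) +
        (2 : F) • hskew_l x (mul w y) z +
        (-1 : F) • hskew_l y (mul x z) w +
        (1 : F) • hskew (mul x y) (mul w z) +
        (4 : F) • hskew_l y (mul w z) x +
        (5 : F) • hskew_r (mul w y) z x +
        (5 : F) • hskew_lr y z x w +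
        (5 : F) • hskew_ll z x w y +
        (5 : F) • hskew_l z y (mul w x) +
        (5 : F) • hskew_l y (mul w x) z +
        (-5 : F) • hskew_ll y x w z +
        (-5 : F) • hskew_ll x w y z +
        (1 : F) • hskew_l z (mul x y) w +
        (-1 : F) • hskew (mul x z) (mul w y) +
        (1 : F) • hskew_l z (mul w y) x +
        (-1 : F) • hskew_ll y w z x
end
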